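/- In the sub-affine λ¢, the β/if critical-pair case closes: if t reduces in one step to the distribution [(pᵢ, tᵢ)]ᵢ, then the two reducts of (λx.t) r, namely the distribution [(pᵢ, (λx.tᵢ) r)]ᵢ and [(1, t[r/x])], both reduce to the common distribution [(pᵢ, tᵢ[r/x])]ᵢ. -/

import Mathlib

/-- Terms of λ¢ (de Bruijn): variables, abstraction, application,
    booleans `one`/`zero`, if-then-else, and a coin. -/
inductive Tm : Type
  | var : Nat → Tm
  | lam : Tm → Tm
  | app : Tm → Tm → Tm
  | one : Tm
  | zero : Tm
  | ite : Tm → Tm → Tm → Tm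
  | coin : Tm
  deriving DecidableEq

/-- Lifting of de Bruijn indices (indices ≥ d are incremented). -/
def lift (d : Nat) : Tm → Tm
  | .var n => if n < d then .var n else .var (n+1)
  | .lam t => .lam (lift (d+1) t)
  | .app t u => .app (lift d t) (lift d u)
  | .one => .one
  | .zero => .zero
  | .ite c a b => .ite (lift d c) (lift d a) (lift d b)
  | .coin => .coin

/-- Capture-avoiding substitution `t[s/k]` (de Bruijn). -/
def subst : Tm → Nat → Tm → Tm
  | .var n, k, s => if n = k then s else if k < n then .var (n-1) else .var n
  | .lam t, k, s => .lam (subst t (k+1) (lift 0 s))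
  | .app t u, k, s => .app (subst t k s) (subst u k s)
  | .one, _, _ => .one
  | .zero, _, _ => .zero
  | .ite c a b, k, s => .ite (subst c k s) (subst a k s) (subst b k s)
  | .coin, _, _ => .coin

/-- One-step probabilistic reduction `t →_p r` of λ¢:
    β, if-rules (probability 1), coin toss (probability 1/2 each),
    closed under all contexts. -/
inductive Step : Tm → ℚ → Tm → Prop
  | beta (t r) : Step (.app (.lam t) r) 1 (subst t 0 r)
  | iteOne (a b) : Step (.ite .one a b) 1 a
  | iteZero (a b) : Step (.ite .zero a b) 1 b
  | coinOne : Step .coin (1/2) .one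
  | coinZero : Step .coin (1/2) .zero
  | lam {t p t'} : Step t p t' → Step (.lam t) p (.lam t')
  | appL {t p t'} (u) : Step t p t' → Step (.app t u) p (.app t' u)
  | appR {u p u'} (t) : Step u p u' → Step (.app t u) p (.app t u')
  | iteC {c p c'} (a b) : Step c p c' → Step (.ite c a b) p (.ite c' a b)
  | iteA {a p a'} (c b) : Step a p a' → Step (.ite c a b) p (.ite c a' b)
  | iteB {b p b'} (c a) : Step b p b' → Step (.ite c a b) p (.ite c a b')

/-- A term is normal if no probabilistic step applies. -/
def NormalTm (t : Tm) : Prop := ¬ ∃ p r, Step t p r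

/-- (Sub)probability distributions over terms, as finitely supported maps. -/
abbrev PDist := Tm →₀ ℚ

/-- Contraction of one redex occurrence of a term, producing the
    distribution of its results: deterministic rules give a Dirac
    distribution, a coin redex splits 1/2–1/2; closed under contexts. -/
inductive TStep : Tm → PDist → Prop
  | beta (t r) : TStep (.app (.lam t) r) (Finsupp.single (subst t 0 r) 1)
  | iteOne (a b) : TStep (.ite .one a b) (Finsupp.single a 1)
  | iteZero (a b) : TStep (.ite .zero a b) (Finsupp.single b 1)
  | coin : TStep .coin (Finsupp.single Tm.one (1/2) + Finsupp.single Tm.zero (1/2))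
  | lam {t D} : TStep t D → TStep (.lam t) (D.mapDomain .lam)
  | appL {t D} (u) : TStep t D → TStep (.app t u) (D.mapDomain (fun s => .app s u))
  | appR {u D} (t) : TStep u D → TStep (.app t u) (D.mapDomain (fun s => .app t s))
  | iteC {c D} (a b) : TStep c D → TStep (.ite c a b) (D.mapDomain (fun s => .ite s a b))
  | iteA {a D} (c b) : TStep a D → TStep (.ite c a b) (D.mapDomain (fun s => .ite c s b))
  | iteB {b D} (c a) : TStep b D → TStep (.ite c a b) (D.mapDomain (fun s => .ite c a s))

/-- One distribution-reduction step: pick a term `t` in the support,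
    contract one redex occurrence of `t` and redistribute its probability
    mass accordingly (equal results are merged by the `Finsupp` addition). -/
def DStep (D D' : PDist) : Prop :=
  ∃ t E, D t ≠ 0 ∧ TStep t E ∧ D' = D.erase t + D t • E

/-- Multistep distribution reduction. -/
def DSteps : PDist → PDist → Prop := Relation.ReflTransGen DStep

/-- A distribution is normal when every term in its support is normal. -/
def NormalDist (D : PDist) : Prop := ∀ t ∈ D.support, NormalTm t

/-- Simple types: booleans and arrows. -/
inductive Ty : Type
  | bool : Ty
  | arrow : Ty → Ty → Ty
  deriving DecidableEq

/-- Typing contexts for the (sub-)affine systems: a partial assignment of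
    types to de Bruijn indices. -/
abbrev Ctx := Nat → Option Ty

/-- Extend a context with a (possibly absent) type for the new index 0. -/
def Ctx.cons (A : Option Ty) (Γ : Ctx) : Ctx := fun n =>
  match n with
  | 0 => A
  | m+1 => Γ m

/-- Disjointness of contexts. -/
def Ctx.disj (Γ Δ : Ctx) : Prop := ∀ n, Γ n = none ∨ Δ n = none

/-- Union of (disjoint) contexts. -/
def Ctx.union (Γ Δ : Ctx) : Ctx := fun n => (Γ n).orElse (fun _ => Δ n)

/-- The empty context. -/
def Ctx.empty : Ctx := fun _ => none

/-- Sub-affine type system: affine, except that the two branches of an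
    if-then-else may share their typing context. -/
inductive SubTy : Ctx → Tm → Ty → Prop
  | var {Γ n A} : Γ n = some A → SubTy Γ (.var n) A
  | lam {Γ t A B} : SubTy (Ctx.cons (some A) Γ) t B → SubTy Γ (.lam t) (.arrow A B)
  | app {Γ Δ t u A B} : Ctx.disj Γ Δ →
      SubTy Γ t (.arrow A B) → SubTy Δ u A → SubTy (Ctx.union Γ Δ) (.app t u) B
  | one {Γ} : SubTy Γ .one .bool
  | zero {Γ} : SubTy Γ .zero .bool
  | coin {Γ} : SubTy Γ .coin .bool
  | ite {Γ Δ c a b A} : Ctx.disj Γ Δ →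
      SubTy Γ c .bool → SubTy Δ a A → SubTy Δ b A →
      SubTy (Ctx.union Γ Δ) (.ite c a b) A

/-!
Contracting the inner redex of `(λx.t) r` and then the outer one gives the distribution
`[(pᵢ, tᵢ[r/x])]ᵢ`, and so does contracting the outer one first, because one-redex contraction
commutes with substitution (`TStep.subst`, resting on the de Bruijn commutation `subst_subst`).
In the first order the redexes `(λx.tᵢ) r` are contracted one at a time. A one-redex
contraction yields a Dirac distribution or a fair split between two terms differing by a single
`one`/`zero`; that relation survives substitution and is asymmetric, so at most one contractum
coincides with the other redex, and contracting that redex first keeps the masses apart.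
-/

theorem lift_lift (t : Tm) :
    ∀ {d e}, d ≤ e → lift d (lift e t) = lift (e + 1) (lift d t) := by
  induction t with
  | var n => intro d e h; simp only [lift]; split_ifs <;> simp only [lift] <;> split_ifs <;> grind
  | lam t ih => intro d e h; simp only [lift, ih (Nat.add_le_add_right h 1)]
  | _ => intros; simp_all [lift]

theorem subst_lift (t : Tm) : ∀ i w, subst (lift i t) i w = t := by
  induction t with
  | var n => intro i w; simp only [lift]; split_ifs <;> simp only [subst] <;> split_ifs <;> grind
  | _ => intros; simp_all [lift, subst]

theorem lift_subst (t : Tm) : ∀ {d k} s, d ≤ k →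
    lift d (subst t k s) = subst (lift d t) (k + 1) (lift d s) := by
  induction t with
  | var n =>
    intro d k s h
    simp only [subst, lift]
    split_ifs <;> simp only [subst, lift] <;> split_ifs <;> grind
  | lam t ih =>
    intro d k s h
    simp only [lift, subst, ih _ (Nat.add_le_add_right h 1), lift_lift s (Nat.zero_le d)]
  | _ => intros; simp_all [lift, subst]

theorem subst_subst (t : Tm) : ∀ {i k} b s, i ≤ k →
    subst (subst t i b) k s = subst (subst t (k + 1) (lift i s)) i (subst b k s) := by
  induction t with
  | var n =>
    intro i k b s h
    simp only [subst]
    split_ifs <;> simp only [subst, subst_lift] <;> (try split_ifs) <;> grind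
  | lam t ih =>
    intro i k b s h
    simp only [subst, ih _ _ (Nat.add_le_add_right h 1), lift_lift s (Nat.zero_le i),
      lift_subst b s (Nat.zero_le k)]
  | _ => intros; simp_all [subst]

theorem TStep.subst {t : Tm} {D : PDist} (h : TStep t D) :
    ∀ k s, TStep (subst t k s) (D.mapDomain (subst · k s)) := by
  induction h with
  | beta t r =>
    intro k s
    rw [Finsupp.mapDomain_single, subst_subst t r s (Nat.zero_le k)]
    exact TStep.beta _ _
  | iteOne => intro k s; rw [Finsupp.mapDomain_single]; exact TStep.iteOne _ _
  | iteZero => intro k s; rw [Finsupp.mapDomain_single]; exact TStep.iteZero _ _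
  | coin =>
    intro k s
    simp only [Finsupp.mapDomain_add, Finsupp.mapDomain_single]
    exact TStep.coin
  | lam _ ih =>
    intro k s
    simpa only [← Finsupp.mapDomain_comp, Function.comp_def, _root_.subst] using (ih _ _).lam
  | appL _ _ ih =>
    intro k s
    simpa only [← Finsupp.mapDomain_comp, Function.comp_def, _root_.subst] using (ih k s).appL _
  | appR _ _ ih =>
    intro k s
    simpa only [← Finsupp.mapDomain_comp, Function.comp_def, _root_.subst] using (ih k s).appR _
  | iteC _ _ _ ih =>
    intro k s
    simpa only [← Finsupp.mapDomain_comp, Function.comp_def, _root_.subst] using (ih k s).iteC _ _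
  | iteA _ _ _ ih =>
    intro k s
    simpa only [← Finsupp.mapDomain_comp, Function.comp_def, _root_.subst] using (ih k s).iteA _ _
  | iteB _ _ _ ih =>
    intro k s
    simpa only [← Finsupp.mapDomain_comp, Function.comp_def, _root_.subst] using (ih k s).iteB _ _

inductive CoinOutcomes : Tm → Tm → Prop
  | coin : CoinOutcomes .one .zero
  | lam {t t'} : CoinOutcomes t t' → CoinOutcomes (.lam t) (.lam t')
  | appL {t t'} (u) : CoinOutcomes t t' → CoinOutcomes (.app t u) (.app t' u)
  | appR {u u'} (t) : CoinOutcomes u u' → CoinOutcomes (.app t u) (.app t u')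
  | iteC {c c'} (a b) : CoinOutcomes c c' → CoinOutcomes (.ite c a b) (.ite c' a b)
  | iteA {a a'} (c b) : CoinOutcomes a a' → CoinOutcomes (.ite c a b) (.ite c a' b)
  | iteB {b b'} (c a) : CoinOutcomes b b' → CoinOutcomes (.ite c a b) (.ite c a b')

def Tm.oneCount : Tm → ℕ
  | .one => 1
  | .lam t => t.oneCount
  | .app t u => t.oneCount + u.oneCount
  | .ite c a b => c.oneCount + a.oneCount + b.oneCount
  | _ => 0

namespace CoinOutcomes

theorem oneCount_eq {u v : Tm} (h : CoinOutcomes u v) : u.oneCount = v.oneCount + 1 := by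
  induction h <;> simp only [Tm.oneCount] <;> omega

theorem ne {u v : Tm} (h : CoinOutcomes u v) : u ≠ v := by
  rintro rfl
  simpa using h.oneCount_eq

theorem asymm {u v : Tm} (h : CoinOutcomes u v) : ¬CoinOutcomes v u := fun h' => by
  have := h.oneCount_eq
  have := h'.oneCount_eq
  omega

theorem subst {u v : Tm} (h : CoinOutcomes u v) :
    ∀ k s, CoinOutcomes (subst u k s) (subst v k s) := by
  induction h with
  | coin => intro k s; exact .coin
  | lam _ ih => intro k s; exact (ih _ _).lam
  | appL _ _ ih => intro k s; exact (ih k s).appL _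
  | appR _ _ ih => intro k s; exact (ih k s).appR _
  | iteC _ _ _ ih => intro k s; exact (ih k s).iteC _ _
  | iteA _ _ _ ih => intro k s; exact (ih k s).iteA _ _
  | iteB _ _ _ ih => intro k s; exact (ih k s).iteB _ _

end CoinOutcomes

theorem TStep.eq_single_or_coinOutcomes {t : Tm} {D : PDist} (h : TStep t D) :
    (∃ u, D = Finsupp.single u 1) ∨
      ∃ u v, CoinOutcomes u v ∧ D = Finsupp.single u (1 / 2) + Finsupp.single v (1 / 2) := by
  induction h with
  | beta | iteOne | iteZero => exact .inl ⟨_, rfl⟩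
  | coin => exact .inr ⟨_, _, .coin, rfl⟩
  | lam _ ih | appL _ _ ih | appR _ _ ih | iteC _ _ _ ih | iteA _ _ _ ih | iteB _ _ _ ih =>
    rcases ih with ⟨u, rfl⟩ | ⟨u, v, huv, rfl⟩
    · exact .inl ⟨_, Finsupp.mapDomain_single⟩
    · refine .inr ⟨_, _, ?_, by
        simp only [Finsupp.mapDomain_add, Finsupp.mapDomain_single]; rfl⟩
      constructor
      exact huv

theorem dstep_single_of_tstep {a : Tm} {E : PDist} (h : TStep a E) :
    DStep (Finsupp.single a 1) E :=
  ⟨a, E, by simp, h, by simp [Finsupp.erase_single]⟩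

theorem dstep_single_add {a a' : Tm} {p : ℚ} {D : PDist} (hp : p ≠ 0) (ha : D a = 0)
    (h : TStep a (Finsupp.single a' 1)) :
    DStep (Finsupp.single a p + D) (Finsupp.single a' p + D) := by
  refine ⟨a, _, by simp [ha, hp], h, ?_⟩
  rw [Finsupp.erase_add, Finsupp.erase_single, Finsupp.erase_of_notMem_support (by simpa)]
  simp [ha, add_comm]

theorem dsteps_pair {a b a' b' : Tm} {p q : ℚ} (hp : p ≠ 0) (hq : q ≠ 0) (hab : a ≠ b)
    (ha : TStep a (Finsupp.single a' 1)) (hb : TStep b (Finsupp.single b' 1))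
    (hswap : ¬(a' = b ∧ b' = a)) :
    DSteps (Finsupp.single a p + Finsupp.single b q)
      (Finsupp.single a' p + Finsupp.single b' q) := by
  rcases not_and_or.mp hswap with hne | hne
  · refine .head (dstep_single_add hp (by simp [hab]) ha) (.single ?_)
    simpa only [add_comm] using
      dstep_single_add (D := Finsupp.single a' p) hq (by simp [hne]) hb
  · refine .head (b := Finsupp.single b' q + Finsupp.single a p) ?_ (.single ?_)
    · simpa only [add_comm] using
        dstep_single_add (D := Finsupp.single a p) hq (by simp [hab]) hb
    · simpa only [add_comm] using
        dstep_single_add (D := Finsupp.single b' q) hp (by simp [hne]) ha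

theorem dsteps_beta_mapDomain {t : Tm} {D : PDist} (r : Tm) (h : TStep t D) :
    DSteps (D.mapDomain (fun s => Tm.app (.lam s) r)) (D.mapDomain (subst · 0 r)) := by
  rcases h.eq_single_or_coinOutcomes with ⟨u, rfl⟩ | ⟨u, v, huv, rfl⟩
  · simp only [Finsupp.mapDomain_single]
    exact .single (dstep_single_of_tstep (.beta u r))
  · simp only [Finsupp.mapDomain_add, Finsupp.mapDomain_single]
    have hredex : CoinOutcomes (.app (.lam u) r) (.app (.lam v) r) := huv.lam.appL r
    refine dsteps_pair (by norm_num) (by norm_num) hredex.ne (.beta u r) (.beta v r) ?_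
    -- the contracta are coin outcomes in the same order as the redexes, hence not swapped
    rintro ⟨hu, hv⟩
    exact hredex.asymm (hu ▸ hv ▸ huv.subst 0 r)

theorem beta_critical_pair_closes {t : Tm} {D : PDist} (r : Tm) (h : TStep t D) :
    DStep (Finsupp.single (Tm.app (.lam t) r) 1)
      (D.mapDomain (fun s => Tm.app (.lam s) r)) ∧
    DStep (Finsupp.single (Tm.app (.lam t) r) 1)
      (Finsupp.single (subst t 0 r) 1) ∧
    DSteps (D.mapDomain (fun s => Tm.app (.lam s) r))
      (D.mapDomain (fun s => subst s 0 r)) ∧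
    DSteps (Finsupp.single (subst t 0 r) 1)
      (D.mapDomain (fun s => subst s 0 r)) := by
  refine ⟨?_, dstep_single_of_tstep (.beta t r), dsteps_beta_mapDomain r h,
    .single (dstep_single_of_tstep (h.subst 0 r))⟩
  have hctx := h.lam.appL r
  rw [← Finsupp.mapDomain_comp] at hctx
  exact dstep_single_of_tstep hctx
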